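/- Let q, r, s be natural numbers with 2 ≤ q ≤ r ≤ s and such that at least two of q, r, s are equal. If 1 − 1/q − 1/r − 1/s > 0, then 1 − 1/q − 1/r − 1/s ≥ 1/12, with the minimum attained at (q,r,s) = (3,3,4). -/
import Mathlib

lemma inv_anti' {n m : ℕ} (hn : 0 < n) (h : n ≤ m) : ((m:ℚ))⁻¹ ≤ ((n:ℚ))⁻¹ := by
  apply inv_anti₀
  · exact_mod_cast hn
  · exact_mod_cast h

theorem stmt_6 (q r s : ℕ) (hq : 2 ≤ q) (hqr : q ≤ r) (hrs : r ≤ s)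
    (heq : q = r ∨ r = s ∨ q = s)
    (hpos : (0 : ℚ) < 1 - 1 / q - 1 / r - 1 / s) :
    (1 : ℚ) / 12 ≤ 1 - 1 / q - 1 / r - 1 / s ∧
      (1 : ℚ) - 1 / 3 - 1 / 3 - 1 / 4 = 1 / 12 := by
  refine ⟨?_, by norm_num⟩
  have hs0 : 0 < s := by omega
  have hr0 : 0 < r := by omega
  have hq0 : 0 < q := by omega
  simp only [one_div] at hpos ⊢
  have hspos : (0:ℚ) ≤ ((s:ℚ))⁻¹ := by positivity
  rcases heq with h | h | h
  · -- q = r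
    subst h
    rcases Nat.lt_or_ge q 4 with h4 | h4
    · interval_cases q
      · push_cast at hpos; norm_num at hpos; linarith
      · -- q = 3
        push_cast at hpos ⊢
        have h1 : ((s:ℚ))⁻¹ < (3:ℚ)⁻¹ := by norm_num at hpos ⊢; linarith
        have hs4 : 4 ≤ s := by
          by_contra hc
          have := inv_anti' (n := s) (m := 3) hs0 (by omega)
          push_cast at this
          linarith
        have := inv_anti' (n := 4) (m := s) (by norm_num) hs4
        push_cast at this
        norm_num at this ⊢
        linarith
    · have h1 : ((q:ℚ))⁻¹ ≤ (4:ℚ)⁻¹ := by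
        have := inv_anti' (n := 4) (m := q) (by norm_num) h4
        push_cast at this; linarith
      have h2 : ((s:ℚ))⁻¹ ≤ (4:ℚ)⁻¹ := by
        have := inv_anti' (n := 4) (m := s) (by norm_num) (by omega)
        push_cast at this; linarith
      norm_num at h1 h2 ⊢
      linarith
  · -- r = s
    subst h
    rcases Nat.lt_or_ge q 3 with h3 | h3
    · -- q = 2
      interval_cases q
      push_cast at hpos ⊢
      have h1 : ((r:ℚ))⁻¹ < (4:ℚ)⁻¹ := by norm_num at hpos ⊢; linarith
      have hr5 : 5 ≤ r := by
        by_contra hc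
        have := inv_anti' (n := r) (m := 4) hr0 (by omega)
        push_cast at this
        linarith
      have := inv_anti' (n := 5) (m := r) (by norm_num) hr5
      push_cast at this
      norm_num at this ⊢
      linarith
    · -- q ≥ 3
      have hq3 : ((q:ℚ))⁻¹ ≤ (3:ℚ)⁻¹ := by
        have := inv_anti' (n := 3) (m := q) (by norm_num) h3
        push_cast at this; linarith
      have h1 : ((r:ℚ))⁻¹ < (3:ℚ)⁻¹ := by
        have hrq := inv_anti' (n := q) (m := r) hq0 hqr
        linarith
      have hr4 : 4 ≤ r := by
        by_contra hc
        have := inv_anti' (n := r) (m := 3) hr0 (by omega)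
        push_cast at this
        linarith
      have := inv_anti' (n := 4) (m := r) (by norm_num) hr4
      push_cast at this
      norm_num at this hq3 ⊢
      linarith
  · -- q = s, hence all equal
    have hqr' : q = r := by omega
    subst hqr'
    subst h
    have h1 : ((q:ℚ))⁻¹ < (3:ℚ)⁻¹ := by norm_num; linarith
    have hq4 : 4 ≤ q := by
      by_contra hc
      have := inv_anti' (n := q) (m := 3) hq0 (by omega)
      push_cast at this
      linarith
    have := inv_anti' (n := 4) (m := q) (by norm_num) hq4
    push_cast at this
    norm_num at this ⊢
    linarith
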